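/- On the Heisenberg group, realized as ℝ³ with multiplication (x,y,z)·(x',y',z') = (x+x', y+y', z+z'+xy'), equip ℝ³ with the Riemannian metric making the frame X₁ = ∂/∂x, X₂ = ∂/∂z + x ∂/∂y, X₃ = ∂/∂y orthonormal. Then the Lie brackets satisfy [X₁, X₂] = X₃, [X₂, X₃] = 0, [X₃, X₁] = 0, the field X₃ is geodesic and Killing, and for every unit-speed geodesic γ with γ̇ = a₁X₁ + a₂X₂ + a₃X₃ the rotation speed of X₁ about X₃ along γ equals -a₃/2 and the rotation speed of X₃ about γ̇ equals (a₁² + a₂²)/2. -/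

import Mathlib

/-- An abstract model of the calculus on a Riemannian `3`-manifold: `A` plays the role
of the algebra of smooth functions, `V` the `A`-module of vector fields, equipped with
the action of vector fields on functions, the Lie bracket, a Riemannian metric `g`, its
Levi-Civita connection `nabla` and the oriented cross product `cross`. -/
structure GeomFrame (A V : Type) [CommRing A] [Algebra ℝ A]
    [AddCommGroup V] [Module A V] where
  act : V → A → A
  bracket : V → V → V
  g : V → V → A
  nabla : V → V → V
  cross : V → V → V
  act_add_left : ∀ (X Y : V) (a : A), act (X + Y) a = act X a + act Y a
  act_smul_left : ∀ (f : A) (X : V) (a : A), act (f • X) a = f * act X a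
  act_add_right : ∀ (X : V) (a b : A), act X (a + b) = act X a + act X b
  act_mul : ∀ (X : V) (a b : A), act X (a * b) = a * act X b + b * act X a
  act_const : ∀ (X : V) (r : ℝ), act X (algebraMap ℝ A r) = 0
  g_symm : ∀ v w, g v w = g w v
  g_add_left : ∀ u v w, g (u + v) w = g u w + g v w
  g_smul_left : ∀ (f : A) (v w : V), g (f • v) w = f * g v w
  bracket_antisymm : ∀ v w, bracket v w = - bracket w v
  bracket_add_left : ∀ u v w, bracket (u + v) w = bracket u w + bracket v w
  bracket_smul_left : ∀ (f : A) (v w : V),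
    bracket (f • v) w = f • bracket v w - act w f • v
  nabla_add_left : ∀ u v w, nabla (u + v) w = nabla u w + nabla v w
  nabla_smul_left : ∀ (f : A) (v w : V), nabla (f • v) w = f • nabla v w
  nabla_add_right : ∀ u v w, nabla u (v + w) = nabla u v + nabla u w
  nabla_smul_right : ∀ (f : A) (v w : V),
    nabla v (f • w) = act v f • w + f • nabla v w
  nabla_metric : ∀ X v w, act X (g v w) = g (nabla X v) w + g v (nabla X w)
  nabla_torsion_free : ∀ v w, nabla v w - nabla w v = bracket v w
  cross_antisymm : ∀ v w, cross v w = - cross w v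
  cross_add_left : ∀ u v w, cross (u + v) w = cross u w + cross v w
  cross_smul_left : ∀ (f : A) (v w : V), cross (f • v) w = f • cross v w

/-- `(X₁, X₂, X₃)` is a positively oriented orthonormal (global) frame. -/
structure GeomFrame.IsONFrame {A V : Type} [CommRing A] [Algebra ℝ A]
    [AddCommGroup V] [Module A V] (F : GeomFrame A V) (X₁ X₂ X₃ : V) : Prop where
  g11 : F.g X₁ X₁ = 1
  g22 : F.g X₂ X₂ = 1
  g33 : F.g X₃ X₃ = 1
  g12 : F.g X₁ X₂ = 0
  g13 : F.g X₁ X₃ = 0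
  g23 : F.g X₂ X₃ = 0
  span : ∀ v : V, v = F.g v X₁ • X₁ + F.g v X₂ • X₂ + F.g v X₃ • X₃
  cross12 : F.cross X₁ X₂ = X₃
  cross23 : F.cross X₂ X₃ = X₁
  cross31 : F.cross X₃ X₁ = X₂

/-- Points of the Heisenberg group, realized as `ℝ³` (coordinates `x = p 0`,
`y = p 1`, `z = p 2`). -/
abbrev HPt := Fin 3 → ℝ

/-- The Heisenberg group law `(x,y,z)·(x',y',z') = (x+x', y+y', z+z'+xy')`. -/
def hMul (p q : HPt) : HPt := ![p 0 + q 0, p 1 + q 1, p 2 + q 2 + p 0 * q 1]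

/-- The Lie bracket of two vector fields on `ℝ³`. -/
noncomputable def vbr (v w : HPt → HPt) (p : HPt) : HPt :=
  fderiv ℝ w p (v p) - fderiv ℝ v p (w p)

/-- The frame `X₁ = ∂/∂x`, `X₂ = ∂/∂z + x ∂/∂y`, `X₃ = ∂/∂y`. -/
def hX₁ : HPt → HPt := fun _ => ![1, 0, 0]
def hX₂ : HPt → HPt := fun p => ![0, p 0, 1]
def hX₃ : HPt → HPt := fun _ => ![0, 1, 0]

/-!
All inner products of the orthonormal frame are constant, so the Koszul formula gives the
connection on the frame in terms of the brackets alone: `∇_{Y₂} Y₁ = -½ Y₃`,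
`∇_{Y₃} Y₁ = ∇_{Y₁} Y₃ = -½ Y₂`, `∇_{Y₂} Y₃ = ½ Y₁` and `∇_{Y₁} Y₁ = ∇_{Y₃} Y₃ = 0`.
Hence `∇_v Y₃ = ½ (g(v, Y₂) Y₁ - g(v, Y₁) Y₂)` is skew-adjoint in `v`, which makes `Y₃` Killing,
and both rotation speeds are read off from the same table.
-/

lemma eq_half_mul_of_add_self_eq {A : Type} [CommRing A] [Algebra ℝ A] {x c : A}
    (h : x + x = c) : x = algebraMap ℝ A (1 / 2) * c := by
  rw [← h, ← two_mul, ← mul_assoc, ← map_ofNat (algebraMap ℝ A) 2, ← map_mul]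
  norm_num

lemma eq_zero_of_add_self_eq_zero {A V : Type} [CommRing A] [Algebra ℝ A] [AddCommGroup V]
    [Module A V] {v : V} (h : v + v = 0) : v = 0 := by
  have : algebraMap ℝ A (1 / 2) • (v + v) = v := by
    rw [← two_smul A v, smul_smul, ← map_ofNat (algebraMap ℝ A) 2, ← map_mul]
    norm_num
  rw [← this, h, smul_zero]

namespace GeomFrame

variable {A V : Type} [CommRing A] [Algebra ℝ A] [AddCommGroup V] [Module A V]
  (F : GeomFrame A V)

/-- `R_γ(Y, Z)` along a curve `γ` with `γ̇ = T`. -/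
def rotationSpeed (T Y Z : V) : A := F.g (F.nabla T Y) (F.cross Z Y)

def IsKilling (Z : V) : Prop := ∀ v w : V, F.g (F.nabla v Z) w + F.g v (F.nabla w Z) = 0

lemma g_add_right (u v w : V) : F.g u (v + w) = F.g u v + F.g u w := by
  rw [F.g_symm, F.g_add_left, F.g_symm v, F.g_symm w]

lemma g_smul_right (f : A) (v w : V) : F.g v (f • w) = f * F.g v w := by
  rw [F.g_symm, F.g_smul_left, F.g_symm]

lemma g_neg_left (v w : V) : F.g (-v) w = -F.g v w := by
  rw [← neg_one_smul A v, F.g_smul_left, neg_one_mul]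

lemma g_neg_right (v w : V) : F.g v (-w) = -F.g v w := by
  rw [F.g_symm, F.g_neg_left, F.g_symm]

lemma g_sub_left (u v w : V) : F.g (u - v) w = F.g u w - F.g v w := by
  rw [sub_eq_add_neg, F.g_add_left, F.g_neg_left, sub_eq_add_neg]

lemma g_sub_right (u v w : V) : F.g u (v - w) = F.g u v - F.g u w := by
  rw [F.g_symm, F.g_sub_left, F.g_symm v, F.g_symm w]

lemma g_zero_left (w : V) : F.g 0 w = 0 := by
  simpa using F.g_smul_left 0 0 w

lemma g_zero_right (w : V) : F.g w 0 = 0 := by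
  rw [F.g_symm, F.g_zero_left]

lemma act_zero (X : V) : F.act X 0 = 0 := by
  simpa using F.act_const X 0

lemma act_one (X : V) : F.act X 1 = 0 := by
  simpa using F.act_const X 1

lemma bracket_self (v : V) : F.bracket v v = 0 :=
  eq_zero_of_add_self_eq_zero (A := A) (by nth_rewrite 1 [F.bracket_antisymm]; abel)

lemma cross_self (v : V) : F.cross v v = 0 :=
  eq_zero_of_add_self_eq_zero (A := A) (by nth_rewrite 1 [F.cross_antisymm]; abel)

lemma koszul {X Y Z : V} (hYZ : F.act X (F.g Y Z) = 0) (hXZ : F.act Y (F.g X Z) = 0)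
    (hXY : F.act Z (F.g X Y) = 0) :
    F.g (F.nabla X Y) Z = algebraMap ℝ A (1 / 2) *
      (F.g (F.bracket X Y) Z - F.g Y (F.bracket X Z) - F.g X (F.bracket Y Z)) := by
  apply eq_half_mul_of_add_self_eq
  have hX := F.nabla_metric X Y Z
  have hY := F.nabla_metric Y X Z
  have hZ := F.nabla_metric Z X Y
  rw [← F.nabla_torsion_free X Y, ← F.nabla_torsion_free X Z, ← F.nabla_torsion_free Y Z,
    F.g_sub_left, F.g_sub_right, F.g_sub_right, F.g_symm Y (F.nabla Z X)]
  linear_combination hYZ + hXZ - hXY - hX - hY + hZ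

namespace IsONFrame

variable {F} {Y₁ Y₂ Y₃ : V}

lemma g21 (h : F.IsONFrame Y₁ Y₂ Y₃) : F.g Y₂ Y₁ = 0 := by rw [F.g_symm, h.g12]

lemma g31 (h : F.IsONFrame Y₁ Y₂ Y₃) : F.g Y₃ Y₁ = 0 := by rw [F.g_symm, h.g13]

lemma g32 (h : F.IsONFrame Y₁ Y₂ Y₃) : F.g Y₃ Y₂ = 0 := by rw [F.g_symm, h.g23]

lemma act_g_eq_zero (h : F.IsONFrame Y₁ Y₂ Y₃) (X : V) {P Q : V}
    (hP : P ∈ ({Y₁, Y₂, Y₃} : Set V)) (hQ : Q ∈ ({Y₁, Y₂, Y₃} : Set V)) :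
    F.act X (F.g P Q) = 0 := by
  rcases hP with rfl | rfl | rfl <;> rcases hQ with rfl | rfl | rfl <;>
    simp only [h.g11, h.g22, h.g33, h.g12, h.g13, h.g23, h.g21, h.g31, h.g32, F.act_zero,
      F.act_one]

lemma koszul (h : F.IsONFrame Y₁ Y₂ Y₃) {X Y Z : V} (hX : X ∈ ({Y₁, Y₂, Y₃} : Set V))
    (hY : Y ∈ ({Y₁, Y₂, Y₃} : Set V)) (hZ : Z ∈ ({Y₁, Y₂, Y₃} : Set V)) :
    F.g (F.nabla X Y) Z = algebraMap ℝ A (1 / 2) *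
      (F.g (F.bracket X Y) Z - F.g Y (F.bracket X Z) - F.g X (F.bracket Y Z)) :=
  F.koszul (h.act_g_eq_zero X hY hZ) (h.act_g_eq_zero Y hX hZ) (h.act_g_eq_zero Z hX hY)

lemma ext (h : F.IsONFrame Y₁ Y₂ Y₃) {W W' : V}
    (hW : ∀ Z ∈ ({Y₁, Y₂, Y₃} : Set V), F.g W Z = F.g W' Z) : W = W' := by
  rw [h.span W, h.span W', hW Y₁ (by simp), hW Y₂ (by simp), hW Y₃ (by simp)]

lemma nabla_eq_sum (h : F.IsONFrame Y₁ Y₂ Y₃) (v W : V) :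
    F.nabla v W =
      F.g v Y₁ • F.nabla Y₁ W + F.g v Y₂ • F.nabla Y₂ W + F.g v Y₃ • F.nabla Y₃ W := by
  conv_lhs => rw [h.span v]
  rw [F.nabla_add_left, F.nabla_add_left, F.nabla_smul_left, F.nabla_smul_left,
    F.nabla_smul_left]

end IsONFrame

structure IsHeisenbergFrame (Y₁ Y₂ Y₃ : V) : Prop extends F.IsONFrame Y₁ Y₂ Y₃ where
  bracket12 : F.bracket Y₁ Y₂ = Y₃
  bracket23 : F.bracket Y₂ Y₃ = 0
  bracket31 : F.bracket Y₃ Y₁ = 0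

namespace IsHeisenbergFrame

variable {F} {Y₁ Y₂ Y₃ : V}

lemma bracket21 (h : F.IsHeisenbergFrame Y₁ Y₂ Y₃) : F.bracket Y₂ Y₁ = -Y₃ := by
  rw [F.bracket_antisymm, h.bracket12]

lemma bracket32 (h : F.IsHeisenbergFrame Y₁ Y₂ Y₃) : F.bracket Y₃ Y₂ = 0 := by
  rw [F.bracket_antisymm, h.bracket23, neg_zero]

lemma bracket13 (h : F.IsHeisenbergFrame Y₁ Y₂ Y₃) : F.bracket Y₁ Y₃ = 0 := by
  rw [F.bracket_antisymm, h.bracket31, neg_zero]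

lemma nabla11 (h : F.IsHeisenbergFrame Y₁ Y₂ Y₃) : F.nabla Y₁ Y₁ = 0 :=
  h.ext fun Z hZ => by
    rw [h.koszul (by simp) (by simp) hZ]
    rcases hZ with rfl | rfl | rfl <;>
      simp [h.bracket12, h.bracket13, F.bracket_self, h.g13, F.g_zero_left, F.g_zero_right]

lemma nabla21 (h : F.IsHeisenbergFrame Y₁ Y₂ Y₃) :
    F.nabla Y₂ Y₁ = -(algebraMap ℝ A (1 / 2) • Y₃) :=
  h.ext fun Z hZ => by
    rw [h.koszul (by simp) (by simp) hZ]
    rcases hZ with rfl | rfl | rfl <;>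
      simp [h.bracket12, h.bracket21, h.bracket13, h.bracket23, F.bracket_self, h.g33, h.g13,
        h.g23, h.g31, h.g32, F.g_neg_left, F.g_neg_right, F.g_zero_right, F.g_smul_left]

lemma nabla31 (h : F.IsHeisenbergFrame Y₁ Y₂ Y₃) :
    F.nabla Y₃ Y₁ = -(algebraMap ℝ A (1 / 2) • Y₂) :=
  h.ext fun Z hZ => by
    rw [h.koszul (by simp) (by simp) hZ]
    rcases hZ with rfl | rfl | rfl <;>
      simp [h.bracket12, h.bracket13, h.bracket31, h.bracket32, F.bracket_self, h.g22, h.g33,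
        h.g23, h.g21, F.g_neg_left, F.g_zero_left, F.g_zero_right, F.g_smul_left]

lemma nabla13 (h : F.IsHeisenbergFrame Y₁ Y₂ Y₃) :
    F.nabla Y₁ Y₃ = -(algebraMap ℝ A (1 / 2) • Y₂) :=
  h.ext fun Z hZ => by
    rw [h.koszul (by simp) (by simp) hZ]
    rcases hZ with rfl | rfl | rfl <;>
      simp [h.bracket12, h.bracket13, h.bracket31, h.bracket32, F.bracket_self, h.g22, h.g33,
        h.g23, h.g21, F.g_neg_left, F.g_zero_left, F.g_zero_right, F.g_smul_left]

lemma nabla23 (h : F.IsHeisenbergFrame Y₁ Y₂ Y₃) :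
    F.nabla Y₂ Y₃ = algebraMap ℝ A (1 / 2) • Y₁ :=
  h.ext fun Z hZ => by
    rw [h.koszul (by simp) (by simp) hZ]
    rcases hZ with rfl | rfl | rfl <;>
      simp [h.bracket21, h.bracket31, h.bracket23, h.bracket32, F.bracket_self, h.g11, h.g33,
        h.g12, h.g13, F.g_neg_right, F.g_zero_left, F.g_zero_right, F.g_smul_left]

lemma nabla33 (h : F.IsHeisenbergFrame Y₁ Y₂ Y₃) : F.nabla Y₃ Y₃ = 0 :=
  h.ext fun Z hZ => by
    rw [h.koszul (by simp) (by simp) hZ]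
    rcases hZ with rfl | rfl | rfl <;>
      simp [h.bracket31, h.bracket32, F.bracket_self, F.g_zero_left, F.g_zero_right]

lemma nabla_Y₁ (h : F.IsHeisenbergFrame Y₁ Y₂ Y₃) (v : V) :
    F.nabla v Y₁ =
      -((algebraMap ℝ A (1 / 2) * F.g v Y₃) • Y₂ + (algebraMap ℝ A (1 / 2) * F.g v Y₂) • Y₃) := by
  rw [h.nabla_eq_sum, h.nabla11, h.nabla21, h.nabla31]
  module

lemma nabla_Y₃ (h : F.IsHeisenbergFrame Y₁ Y₂ Y₃) (v : V) :
    F.nabla v Y₃ =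
      (algebraMap ℝ A (1 / 2) * F.g v Y₂) • Y₁ - (algebraMap ℝ A (1 / 2) * F.g v Y₁) • Y₂ := by
  rw [h.nabla_eq_sum, h.nabla13, h.nabla23, h.nabla33]
  module

lemma isKilling_Y₃ (h : F.IsHeisenbergFrame Y₁ Y₂ Y₃) : F.IsKilling Y₃ := fun v w => by
  rw [h.nabla_Y₃, h.nabla_Y₃, F.g_sub_left, F.g_sub_right, F.g_smul_left, F.g_smul_left,
    F.g_smul_right, F.g_smul_right, F.g_symm Y₁ w, F.g_symm Y₂ w]
  ring

lemma rotationSpeed_Y₁_Y₃ (h : F.IsHeisenbergFrame Y₁ Y₂ Y₃) {T : V} {a₁ a₂ a₃ : A}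
    (hT : T = a₁ • Y₁ + a₂ • Y₂ + a₃ • Y₃) :
    F.rotationSpeed T Y₁ Y₃ = algebraMap ℝ A (-(1 / 2)) * a₃ := by
  rw [rotationSpeed, h.cross31, h.nabla_Y₁, hT]
  simp [F.g_neg_left, F.g_add_left, F.g_smul_left, h.g22, h.g33, h.g12, h.g13, h.g23, h.g32]

lemma rotationSpeed_Y₃ (h : F.IsHeisenbergFrame Y₁ Y₂ Y₃) {T : V} {a₁ a₂ a₃ : A}
    (hT : T = a₁ • Y₁ + a₂ • Y₂ + a₃ • Y₃) :
    F.rotationSpeed T Y₃ T = algebraMap ℝ A (1 / 2) * (a₁ * a₁ + a₂ * a₂) := by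
  rw [rotationSpeed, h.nabla_Y₃, hT]
  simp only [F.g_add_left, F.g_smul_left, h.g12, mul_zero, h.g22, mul_one, zero_add, h.g32,
    add_zero, h.g11, h.g21, h.g31, F.cross_add_left, F.cross_smul_left, F.cross_antisymm Y₁ Y₃,
    h.cross31, smul_neg, h.cross23, F.cross_self, smul_zero, F.g_sub_left, F.g_add_right,
    F.g_neg_right, F.g_smul_right, neg_zero, mul_neg, sub_neg_eq_add]
  ring

end IsHeisenbergFrame

end GeomFrame

lemma hasFDerivAt_hX₁ (p : HPt) : HasFDerivAt hX₁ (0 : HPt →L[ℝ] HPt) p :=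
  hasFDerivAt_const _ p

lemma hasFDerivAt_hX₃ (p : HPt) : HasFDerivAt hX₃ (0 : HPt →L[ℝ] HPt) p :=
  hasFDerivAt_const _ p

lemma hasFDerivAt_hX₂ (p : HPt) :
    HasFDerivAt hX₂ ((ContinuousLinearMap.proj 0).smulRight ![0, 1, 0] : HPt →L[ℝ] HPt) p := by
  have : hX₂ = fun q => q 0 • ![0, 1, 0] + ![0, 0, 1] := by
    funext q; ext i; fin_cases i <;> simp [hX₂]
  rw [this]
  exact ((hasFDerivAt_apply 0 p).smul_const _).add_const _

lemma vbr_hX₁_hX₂ (p : HPt) : vbr hX₁ hX₂ p = hX₃ p := by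
  simp [vbr, (hasFDerivAt_hX₁ p).fderiv, (hasFDerivAt_hX₂ p).fderiv, hX₁, hX₃]

lemma vbr_hX₂_hX₃ (p : HPt) : vbr hX₂ hX₃ p = 0 := by
  simp [vbr, (hasFDerivAt_hX₂ p).fderiv, (hasFDerivAt_hX₃ p).fderiv, hX₃]

lemma vbr_hX₃_hX₁ (p : HPt) : vbr hX₃ hX₁ p = 0 := by
  simp [vbr, (hasFDerivAt_hX₁ p).fderiv, (hasFDerivAt_hX₃ p).fderiv]

theorem heisenberg_top_general {A V : Type} [CommRing A]
    [Algebra ℝ A] [AddCommGroup V] [Module A V] (F : GeomFrame A V)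
    (Y₁ Y₂ Y₃ : V) (hON : F.IsONFrame Y₁ Y₂ Y₃)
    (hb12 : F.bracket Y₁ Y₂ = Y₃)
    (hb23 : F.bracket Y₂ Y₃ = 0)
    (hb31 : F.bracket Y₃ Y₁ = 0)
    (T : V) (a₁ a₂ a₃ : A)
    (hT : T = a₁ • Y₁ + a₂ • Y₂ + a₃ • Y₃) :
    (∀ p : HPt, vbr hX₁ hX₂ p = hX₃ p ∧ vbr hX₂ hX₃ p = 0 ∧ vbr hX₃ hX₁ p = 0) ∧
    F.nabla Y₃ Y₃ = 0 ∧
    (∀ v w : V, F.g (F.nabla v Y₃) w + F.g v (F.nabla w Y₃) = 0) ∧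
    F.g (F.nabla T Y₁) (F.cross Y₃ Y₁) = algebraMap ℝ A (-(1 / 2)) * a₃ ∧
    F.g (F.nabla T Y₃) (F.cross T Y₃) =
      algebraMap ℝ A (1 / 2) * (a₁ * a₁ + a₂ * a₂) := by
  have h : F.IsHeisenbergFrame Y₁ Y₂ Y₃ := ⟨hON, hb12, hb23, hb31⟩
  exact ⟨fun p => ⟨vbr_hX₁_hX₂ p, vbr_hX₂_hX₃ p, vbr_hX₃_hX₁ p⟩, h.nabla33, h.isKilling_Y₃,
    h.rotationSpeed_Y₁_Y₃ hT, h.rotationSpeed_Y₃ hT⟩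

/-- on the Heisenberg group the frame satisfies `[X₁,X₂] = X₃`,
`[X₂,X₃] = 0`, `[X₃,X₁] = 0`; for the metric making it orthonormal (modelled by
an abstract `GeomFrame` whose frame has these bracket relations), `X₃` is geodesic
and Killing, and along every unit-speed geodesic `γ̇ = a₁X₁ + a₂X₂ + a₃X₃` the
rotation speed of `X₁` about `X₃` is `-a₃/2`, and that of `X₃` about `γ̇` is
`(a₁² + a₂²)/2`. -/
theorem heisenberg_top {A V : Type} [CommRing A]
    [Algebra ℝ A] [AddCommGroup V] [Module A V] (F : GeomFrame A V)
    (Y₁ Y₂ Y₃ : V) (hON : F.IsONFrame Y₁ Y₂ Y₃)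
    (hb12 : F.bracket Y₁ Y₂ = Y₃)
    (hb23 : F.bracket Y₂ Y₃ = 0)
    (hb31 : F.bracket Y₃ Y₁ = 0)
    (T : V) (a₁ a₂ a₃ : A)
    (hT : T = a₁ • Y₁ + a₂ • Y₂ + a₃ • Y₃)
    (hgeo : F.nabla T T = 0) (hunit : F.g T T = 1) :
    (∀ p : HPt, vbr hX₁ hX₂ p = hX₃ p ∧ vbr hX₂ hX₃ p = 0 ∧ vbr hX₃ hX₁ p = 0) ∧
    F.nabla Y₃ Y₃ = 0 ∧
    (∀ v w : V, F.g (F.nabla v Y₃) w + F.g v (F.nabla w Y₃) = 0) ∧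
    F.g (F.nabla T Y₁) (F.cross Y₃ Y₁) = algebraMap ℝ A (-(1 / 2)) * a₃ ∧
    F.g (F.nabla T Y₃) (F.cross T Y₃) =
      algebraMap ℝ A (1 / 2) * (a₁ * a₁ + a₂ * a₂) :=
  heisenberg_top_general F Y₁ Y₂ Y₃ hON hb12 hb23 hb31 T a₁ a₂ a₃ hT
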